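/- Let A be a d×d symmetric positive semidefinite matrix with eigenvalues s_1 ≥ ... ≥ s_d ≥ 0, and let t, τ, c > 0. Then tr((t²A + cI)^{-2}(t⁴A + cτ²I)) = Σ_{j=1}^d (t⁴s_j + cτ²)/(t²s_j + c)², and this is minimized over t ∈ [0, ∞) at t = τ, with minimal value Σ_{j=1}^d τ²/(τ²s_j + c) = tr((A + (c/τ²)I)^{-1}). -/

import Mathlib

/-!
Diagonalising `A = U diag(s) Uᴴ` turns every matrix built from `A` and `1` into a diagonal one,
so each trace is a sum over the eigenvalues `s_j ≥ 0`. Termwise,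
`(t⁴s + cτ²)/(t²s + c)² = τ²/(τ²s + c) + cs(τ² - t²)²/((t²s + c)²(τ²s + c))`,
whose second summand is nonnegative and vanishes at `t = τ`.
-/
open Matrix Unitary

section Conjugation

variable {n R : Type*} [Fintype n] [DecidableEq n] [CommRing R] [StarRing R]

theorem Matrix.inv_conjStarAlgAut (u : unitary (Matrix n n R)) (M : Matrix n n R) :
    (conjStarAlgAut R _ u M)⁻¹ = conjStarAlgAut R _ u M⁻¹ := by
  rw [conjStarAlgAut_apply, conjStarAlgAut_apply, mul_inv_rev, mul_inv_rev, ← coe_star,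
    inv_eq_left_inv (coe_mul_star_self u), inv_eq_left_inv (coe_star_mul_self u), mul_assoc,
    coe_star]

theorem Matrix.trace_conjStarAlgAut (u : unitary (Matrix n n R)) (M : Matrix n n R) :
    (conjStarAlgAut R _ u M).trace = M.trace := by
  rw [conjStarAlgAut_apply, trace_mul_cycle, coe_star_mul_self, one_mul]

end Conjugation

theorem Matrix.inv_diagonal_of_ne_zero {n K : Type*} [Fintype n] [DecidableEq n] [Field K]
    {v : n → K} (hv : ∀ j, v j ≠ 0) : (diagonal v)⁻¹ = diagonal fun j => (v j)⁻¹ :=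
  inv_eq_left_inv <| by simp [diagonal_mul_diagonal, hv]

namespace Matrix.IsHermitian

variable {n : Type*} [Fintype n] [DecidableEq n] {A : Matrix n n ℝ}

theorem smul_add_smul_one_eq (hA : A.IsHermitian) (a b : ℝ) :
    a • A + b • (1 : Matrix n n ℝ) =
      conjStarAlgAut ℝ _ hA.eigenvectorUnitary (diagonal fun j => a * hA.eigenvalues j + b) := by
  conv_lhs => rw [hA.spectral_theorem]
  rw [← map_one (conjStarAlgAut ℝ _ hA.eigenvectorUnitary), ← map_smul, ← map_smul, ← map_add]
  congr 1
  ext i j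
  rcases eq_or_ne i j with rfl | h
  · simp
  · simp [h]

theorem trace_inv_sq_mul_eq_sum (hA : A.IsHermitian) {a b : ℝ}
    (hab : ∀ j, a * hA.eigenvalues j + b ≠ 0) (a' b' : ℝ) :
    ((a • A + b • (1 : Matrix n n ℝ))⁻¹ ^ 2 * (a' • A + b' • (1 : Matrix n n ℝ))).trace =
      ∑ j, (a' * hA.eigenvalues j + b') / (a * hA.eigenvalues j + b) ^ 2 := by
  rw [hA.smul_add_smul_one_eq, hA.smul_add_smul_one_eq, inv_conjStarAlgAut, ← map_pow, ← map_mul,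
    trace_conjStarAlgAut, inv_diagonal_of_ne_zero hab, diagonal_pow, diagonal_mul_diagonal,
    trace_diagonal]
  congr 1 with j
  simp [div_eq_mul_inv, mul_comm]

theorem trace_inv_smul_add_smul_one (hA : A.IsHermitian) {a b : ℝ}
    (hab : ∀ j, a * hA.eigenvalues j + b ≠ 0) :
    ((a • A + b • (1 : Matrix n n ℝ))⁻¹).trace = ∑ j, (a * hA.eigenvalues j + b)⁻¹ := by
  rw [hA.smul_add_smul_one_eq, inv_conjStarAlgAut, trace_conjStarAlgAut,
    inv_diagonal_of_ne_zero hab, trace_diagonal]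

end Matrix.IsHermitian

theorem ridge_term_eq (s t τ c : ℝ) (ht : t ^ 2 * s + c ≠ 0) (hτ : τ ^ 2 * s + c ≠ 0) :
    (t ^ 4 * s + c * τ ^ 2) / (t ^ 2 * s + c) ^ 2 =
      τ ^ 2 / (τ ^ 2 * s + c) +
        c * s * (τ ^ 2 - t ^ 2) ^ 2 / ((t ^ 2 * s + c) ^ 2 * (τ ^ 2 * s + c)) := by
  rw [div_add_div _ _ hτ (by positivity), div_eq_div_iff (by positivity) (by positivity)]
  ring

theorem ridge_term_at_self (s τ c : ℝ) (hτ : τ ^ 2 * s + c ≠ 0) :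
    (τ ^ 4 * s + c * τ ^ 2) / (τ ^ 2 * s + c) ^ 2 = τ ^ 2 / (τ ^ 2 * s + c) := by
  simpa using ridge_term_eq s τ τ c hτ hτ

theorem ridge_term_min {s c : ℝ} (hs : 0 ≤ s) (hc : 0 < c) (t τ : ℝ) :
    τ ^ 2 / (τ ^ 2 * s + c) ≤ (t ^ 4 * s + c * τ ^ 2) / (t ^ 2 * s + c) ^ 2 := by
  have ht : 0 < t ^ 2 * s + c := by positivity
  have hτ : 0 < τ ^ 2 * s + c := by positivity
  rw [ridge_term_eq s t τ c ht.ne' hτ.ne']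
  exact le_add_of_nonneg_right (by positivity)

theorem stmt_9 (d : ℕ) (A : Matrix (Fin d) (Fin d) ℝ) (hA : A.PosSemidef)
    (τ c : ℝ) (hτ : 0 < τ) (hc : 0 < c) :
    (∀ t : ℝ, 0 ≤ t →
      ((t ^ 2 • A + c • (1 : Matrix (Fin d) (Fin d) ℝ))⁻¹ ^ 2 *
          (t ^ 4 • A + (c * τ ^ 2) • (1 : Matrix (Fin d) (Fin d) ℝ))).trace =
        ∑ j, (t ^ 4 * hA.isHermitian.eigenvalues j + c * τ ^ 2) /
          (t ^ 2 * hA.isHermitian.eigenvalues j + c) ^ 2) ∧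
    (∀ t : ℝ, 0 ≤ t →
      ((τ ^ 2 • A + c • (1 : Matrix (Fin d) (Fin d) ℝ))⁻¹ ^ 2 *
          (τ ^ 4 • A + (c * τ ^ 2) • (1 : Matrix (Fin d) (Fin d) ℝ))).trace ≤
        ((t ^ 2 • A + c • (1 : Matrix (Fin d) (Fin d) ℝ))⁻¹ ^ 2 *
          (t ^ 4 • A + (c * τ ^ 2) • (1 : Matrix (Fin d) (Fin d) ℝ))).trace) ∧
    ((τ ^ 2 • A + c • (1 : Matrix (Fin d) (Fin d) ℝ))⁻¹ ^ 2 *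
          (τ ^ 4 • A + (c * τ ^ 2) • (1 : Matrix (Fin d) (Fin d) ℝ))).trace =
        ∑ j, τ ^ 2 / (τ ^ 2 * hA.isHermitian.eigenvalues j + c) ∧
    ((τ ^ 2 • A + c • (1 : Matrix (Fin d) (Fin d) ℝ))⁻¹ ^ 2 *
          (τ ^ 4 • A + (c * τ ^ 2) • (1 : Matrix (Fin d) (Fin d) ℝ))).trace =
        ((A + (c / τ ^ 2) • (1 : Matrix (Fin d) (Fin d) ℝ))⁻¹).trace := by
  have hpos : ∀ t j, 0 < t ^ 2 * hA.isHermitian.eigenvalues j + c := fun t j => by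
    have := hA.eigenvalues_nonneg j
    positivity
  have htrace : ∀ t, ((t ^ 2 • A + c • (1 : Matrix (Fin d) (Fin d) ℝ))⁻¹ ^ 2 *
      (t ^ 4 • A + (c * τ ^ 2) • (1 : Matrix (Fin d) (Fin d) ℝ))).trace =
        ∑ j, (t ^ 4 * hA.isHermitian.eigenvalues j + c * τ ^ 2) /
          (t ^ 2 * hA.isHermitian.eigenvalues j + c) ^ 2 := fun t =>
    hA.isHermitian.trace_inv_sq_mul_eq_sum (fun j => (hpos t j).ne') _ _
  have hmin : ((τ ^ 2 • A + c • (1 : Matrix (Fin d) (Fin d) ℝ))⁻¹ ^ 2 *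
      (τ ^ 4 • A + (c * τ ^ 2) • (1 : Matrix (Fin d) (Fin d) ℝ))).trace =
        ∑ j, τ ^ 2 / (τ ^ 2 * hA.isHermitian.eigenvalues j + c) := by
    rw [htrace]
    exact Finset.sum_congr rfl fun j _ => ridge_term_at_self _ _ _ (hpos τ j).ne'
  refine ⟨fun t _ => htrace t, fun t _ => ?_, hmin, ?_⟩
  · rw [hmin, htrace]
    exact Finset.sum_le_sum fun j _ => ridge_term_min (hA.eigenvalues_nonneg j) hc t τ
  · have hshift : ∀ j, 1 * hA.isHermitian.eigenvalues j + c / τ ^ 2 ≠ 0 := fun j => by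
      have := hA.eigenvalues_nonneg j
      positivity
    have hinv := hA.isHermitian.trace_inv_smul_add_smul_one hshift
    rw [one_smul] at hinv
    rw [hmin, hinv]
    refine Finset.sum_congr rfl fun j _ => ?_
    field_simp
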